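/- For preconditioned TARK applied to min_y ||b - Qy||^2 where Q ∈ R^{n×r} has orthonormal columns, if the initialization y_0 satisfies E||y_0 - y_star||^2 ≤ r ||b - Q y_star||^2, then the TARK output ȳ_t satisfies E||b - Q ȳ_t||^2 ≤ [1 + (1 - 1/r)^{t_b} r + (2r-1)/(t - t_b)] ||b - Q y_star||^2. -/

import Mathlib

open Matrix Finset
noncomputable section

/-- Squared Euclidean norm of a vector. -/
def vnormSq {k : ℕ} (x : Fin k → ℝ) : ℝ := ∑ i, x i ^ 2

/-- Squared Frobenius norm of a matrix. -/
def frobSq {n d : ℕ} (A : Matrix (Fin n) (Fin d) ℝ) : ℝ := ∑ i, vnormSq (A i)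

/-- Row sampling probability ‖a_i‖²/‖A‖_F² used by randomized Kaczmarz. -/
def rowProb {n d : ℕ} (A : Matrix (Fin n) (Fin d) ℝ) (i : Fin n) : ℝ := vnormSq (A i) / frobSq A

/-- Spectral norm (ℓ²-operator norm) of a matrix. -/
def matSpectralNorm {n d : ℕ} (M : Matrix (Fin n) (Fin d) ℝ) : ℝ :=
  ‖LinearMap.toContinuousLinearMap (Matrix.toEuclideanLin M)‖

/-- The four Penrose conditions characterizing the Moore–Penrose pseudoinverse. -/
def IsMoorePenrose {n d : ℕ} (A : Matrix (Fin n) (Fin d) ℝ) (Ap : Matrix (Fin d) (Fin n) ℝ) : Prop :=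
  A * Ap * A = A ∧ Ap * A * Ap = Ap ∧ (A * Ap)ᵀ = A * Ap ∧ (Ap * A)ᵀ = Ap * A

/-- Demmel condition number κ_dem = ‖A⁺‖ ‖A‖_F. -/
def kdem {n d : ℕ} (A : Matrix (Fin n) (Fin d) ℝ) (Ap : Matrix (Fin d) (Fin n) ℝ) : ℝ :=
  matSpectralNorm Ap * Real.sqrt (frobSq A)

/-- One randomized Kaczmarz update using row i. -/
def rkStep {n d : ℕ} (A : Matrix (Fin n) (Fin d) ℝ) (b : Fin n → ℝ) (i : Fin n) (x : Fin d → ℝ) :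
    Fin d → ℝ := x + ((b i - A i ⬝ᵥ x) / vnormSq (A i)) • A i

/-- Randomized Kaczmarz iterates along a fixed path ω of row indices. -/
def rkSeq {n d : ℕ} (A : Matrix (Fin n) (Fin d) ℝ) (b : Fin n → ℝ) (x0 : Fin d → ℝ)
    (ω : ℕ → Fin n) : ℕ → Fin d → ℝ
  | 0 => x0
  | t + 1 => rkStep A b (ω t) (rkSeq A b x0 ω t)

/-- Extend a finite path of indices to an infinite one. -/
def extendPath {n T : ℕ} [NeZero n] (ω : Fin T → Fin n) : ℕ → Fin n :=
  fun s => if h : s < T then ω ⟨s, h⟩ else 0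

/-- Probability of a finite path of i.i.d. row indices. -/
def pathWeight {n d T : ℕ} (A : Matrix (Fin n) (Fin d) ℝ) (ω : Fin T → Fin n) : ℝ :=
  ∏ t, rowProb A (ω t)

/-- The expected one-step Kaczmarz contraction matrix I - AᵀA/‖A‖_F². -/
def kacMat {n d : ℕ} (A : Matrix (Fin n) (Fin d) ℝ) : Matrix (Fin d) (Fin d) ℝ :=
  1 - (frobSq A)⁻¹ • (Aᵀ * A)

/-- x lies in the row space range(Aᵀ). -/
def inRowSpace {n d : ℕ} (A : Matrix (Fin n) (Fin d) ℝ) (x : Fin d → ℝ) : Prop :=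
  ∃ u : Fin n → ℝ, x = Aᵀ *ᵥ u

/-- RK-RR iterates: Kaczmarz step followed by weight decay by μ. -/
def rrSeq {n d : ℕ} (A : Matrix (Fin n) (Fin d) ℝ) (b : Fin n → ℝ) (μ : ℝ) (x0 : Fin d → ℝ)
    (ω : ℕ → Fin n) : ℕ → Fin d → ℝ
  | 0 => x0
  | t + 1 => μ • rkStep A b (ω t) (rrSeq A b μ x0 ω t)

/-- Orthogonal projection step (I - a aᵀ/‖a‖²) x for row a = A i. -/
def projStep {n d : ℕ} (A : Matrix (Fin n) (Fin d) ℝ) (i : Fin n) (x : Fin d → ℝ) : Fin d → ℝ :=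
  x - ((A i ⬝ᵥ x) / vnormSq (A i)) • A i

/-- RK-RR bias sequence m_{t+1} = μ (I - a aᵀ/‖a‖²) m_t. -/
def biasSeq {n d : ℕ} (A : Matrix (Fin n) (Fin d) ℝ) (μ : ℝ) (m0 : Fin d → ℝ)
    (ω : ℕ → Fin n) : ℕ → Fin d → ℝ
  | 0 => m0
  | t + 1 => μ • projStep A (ω t) (biasSeq A μ m0 ω t)

/-- RK-RR variance sequence v_{t+1} = μ(I - aaᵀ/‖a‖²)v_t + μ (b_i - aᵀx_μ)a/‖a‖² - (1-μ)x_μ. -/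
def varSeq {n d : ℕ} (A : Matrix (Fin n) (Fin d) ℝ) (b : Fin n → ℝ) (μ : ℝ) (xmu : Fin d → ℝ)
    (ω : ℕ → Fin n) : ℕ → Fin d → ℝ
  | 0 => 0
  | t + 1 => μ • projStep A (ω t) (varSeq A b μ xmu ω t)
      + (μ * ((b (ω t) - A (ω t) ⬝ᵥ xmu) / vnormSq (A (ω t)))) • A (ω t)
      - (1 - μ) • xmu

/-- Covariance matrix Σ = I_m + v 1_m 1_mᵀ. -/
def covM (m : ℕ) (v : ℝ) : Matrix (Fin m) (Fin m) ℝ := 1 + v • Matrix.of fun _ _ => 1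

/-- Block Σ_{S,T} of the covariance matrix Σ = I + v 1 1ᵀ. -/
def subBlock {m : ℕ} (v : ℝ) (S T : Finset (Fin m)) : Matrix ↥S ↥T ℝ :=
  (covM m v).submatrix (fun i => i.1) (fun j => j.1)

/-- A deterministic adaptive algorithm that accesses at most t entries of b
(given full access to A) and outputs an estimate of the least-squares solution. -/
structure RowAccessAlg (d t : ℕ) where
  query : (n : ℕ) → Matrix (Fin n) (Fin d) ℝ → (j : Fin t) → (Fin (j : ℕ) → ℝ) → Fin n
  output : (n : ℕ) → Matrix (Fin n) (Fin d) ℝ → (Fin t → ℝ) → Fin d → ℝ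

/-- The successive answers to the algorithm's adaptive queries. -/
def RowAccessAlg.answers {d t : ℕ} (alg : RowAccessAlg d t) (n : ℕ)
    (A : Matrix (Fin n) (Fin d) ℝ) (b : Fin n → ℝ) : (j : ℕ) → j < t → ℝ
  | j, h => b (alg.query n A ⟨j, h⟩ fun i => alg.answers n A b i (i.isLt.trans h))
  termination_by j _ => j

/-- The algorithm's output estimate on the problem (A, b). -/
def RowAccessAlg.run {d t : ℕ} (alg : RowAccessAlg d t) (n : ℕ)
    (A : Matrix (Fin n) (Fin d) ℝ) (b : Fin n → ℝ) : Fin d → ℝ :=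
  alg.output n A fun j => alg.answers n A b j j.isLt


/-!
Write `y⋆ = Qᵀ b` and `ρ = b - Q y⋆`. Since `Qᵀ ρ = 0` and `Q` is an isometry,
`‖b - Q y‖² = ‖ρ‖² + ‖y - y⋆‖²`, so only the mean squared error of the tail average matters.
Because `QᵀQ = I`, the rows are sampled with probability `‖qᵢ‖² / r`, and with `γ = 1 - 1/r`
the errors `e_s = y_s - y⋆` satisfy `E[e_{s+1} | past] = γ e_s` and
`E‖e_{s+1}‖² ≤ γ E‖e_s‖² + ‖ρ‖² / r`. Hence, for `t_b ≤ s, s'`,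
`E⟨e_s, e_{s'}⟩ = γ^|s-s'| E‖e_min(s,s')‖² ≤ γ^t_b ‖e_0‖² + γ^|s-s'| ‖ρ‖²`, and the double sum over
the tail is controlled by `∑ₖ γ^|k| ≤ (1 + γ) / (1 - γ) = 2r - 1`.
Averaging the resulting bound over `y_0` gives the theorem.
-/

open Function

section ProductWeights

variable {ι α : Type*} [Fintype ι] [DecidableEq ι] [Fintype α] {p : α → ℝ}

theorem sum_prod_apply_eq_one (hp : ∑ a, p a = 1) : ∑ ω : ι → α, ∏ j, p (ω j) = 1 := by
  rw [← Fintype.piFinset_univ, ← Finset.prod_univ_sum]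
  simp [hp]

theorem sum_prod_mul_eq_sum_prod_mul_sum_coord (hp : ∑ a, p a = 1) (k : ι)
    (G : (ι → α) → α → ℝ) (hG : ∀ ω a, G (update ω k a) = G ω) :
    ∑ ω, (∏ j, p (ω j)) * G ω (ω k) = ∑ ω, (∏ j, p (ω j)) * ∑ a, p a * G ω a := by
  have hweight : ∀ ω a, (∏ j, p (update ω k a j)) * p (ω k) = (∏ j, p (ω j)) * p a := by
    intro ω a
    rw [Fintype.prod_eq_mul_prod_compl k, Fintype.prod_eq_mul_prod_compl k (fun j => p (ω j)),
      Finset.prod_congr rfl fun j hj => by rw [update_of_ne (Finset.mem_compl.1 hj ∘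
        Finset.mem_singleton.2)], update_self]
    ring
  set f : (ι → α) × α → ℝ := fun x => (∏ j, p (x.1 j)) * p x.2 * G x.1 (x.1 k)
  -- resampling the coordinate `k` is an involution of (paths) × (states) that preserves weights
  let σ : Equiv.Perm ((ι → α) × α) :=
    Involutive.toPerm (fun x => (update x.1 k x.2, x.1 k)) fun x => by simp
  calc ∑ ω, (∏ j, p (ω j)) * G ω (ω k)
      = ∑ x, f x := by
        simp only [f, Fintype.sum_prod_type, mul_right_comm _ (p _), ← Finset.mul_sum,
          hp, mul_one]
    _ = ∑ x, f (σ x) := (Equiv.sum_comp σ f).symm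
    _ = ∑ ω, (∏ j, p (ω j)) * ∑ a, p a * G ω a := by
        rw [Fintype.sum_prod_type]
        refine Finset.sum_congr rfl fun ω _ => ?_
        rw [Finset.mul_sum]
        refine Finset.sum_congr rfl fun a _ => ?_
        change (∏ j, p (update ω k a j)) * p (ω k) * G (update ω k a) (update ω k a k) = _
        rw [hweight, hG, update_self, mul_assoc]

end ProductWeights

theorem vnormSq_eq_dotProduct {k : ℕ} (x : Fin k → ℝ) : vnormSq x = x ⬝ᵥ x := by
  simp [vnormSq, dotProduct, sq]

theorem vnormSq_nonneg {k : ℕ} (x : Fin k → ℝ) : 0 ≤ vnormSq x :=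
  Finset.sum_nonneg fun i _ => sq_nonneg (x i)

theorem vnormSq_smul {k : ℕ} (c : ℝ) (x : Fin k → ℝ) : vnormSq (c • x) = c ^ 2 * vnormSq x := by
  simp [vnormSq, mul_pow, Finset.mul_sum]

theorem one_sub_one_div_nonneg {r : ℕ} (hr : 0 < r) : 0 ≤ 1 - 1 / (r : ℝ) := by
  rw [sub_nonneg, div_le_one (by exact_mod_cast hr)]
  exact_mod_cast hr

theorem one_sub_one_div_lt_one {r : ℕ} (hr : 0 < r) : 1 - 1 / (r : ℝ) < 1 := by
  have : (0 : ℝ) < 1 / r := by positivity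
  linarith

theorem sum_pow_dist_le {γ : ℝ} (h0 : 0 ≤ γ) (h1 : γ < 1) (s : ℕ) (S : Finset ℕ) :
    ∑ s' ∈ S, γ ^ Nat.dist s s' ≤ (1 + γ) / (1 - γ) := by
  have hinj : ∀ (f : ℕ → ℕ) (U : Finset ℕ), Set.InjOn f U → ∑ u ∈ U, γ ^ f u ≤ (1 - γ)⁻¹ := by
    intro f U hf
    rw [← Finset.sum_image hf, ← tsum_geometric_of_lt_one h0 h1]
    exact Summable.sum_le_tsum _ (fun i _ => pow_nonneg h0 i) (summable_geometric_of_lt_one h0 h1)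
  have hbefore : ∑ s' ∈ S with s' ≤ s, γ ^ Nat.dist s s' ≤ (1 - γ)⁻¹ := by
    rw [Finset.sum_congr rfl fun s' hs' => by
      rw [Nat.dist_eq_sub_of_le_right (Finset.mem_filter.1 hs').2]]
    refine hinj (s - ·) _ fun a ha c hc hac => ?_
    simp only [Finset.coe_filter, Set.mem_ofPred_eq] at ha hc hac
    omega
  have hafter : ∑ s' ∈ S with ¬s' ≤ s, γ ^ Nat.dist s s' ≤ γ * (1 - γ)⁻¹ := by
    rw [Finset.sum_congr rfl fun s' hs' => by
      rw [Nat.dist_eq_sub_of_le (le_of_not_ge (Finset.mem_filter.1 hs').2),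
        show s' - s = (s' - s - 1) + 1 by have := (Finset.mem_filter.1 hs').2; omega, pow_succ'],
      ← Finset.mul_sum]
    refine mul_le_mul_of_nonneg_left (hinj (· - s - 1) _ fun a ha c hc hac => ?_) h0
    simp only [Finset.coe_filter, Set.mem_ofPred_eq] at ha hc hac
    omega
  rw [← Finset.sum_filter_add_sum_filter_not S (· ≤ s)]
  calc _ ≤ (1 - γ)⁻¹ + γ * (1 - γ)⁻¹ := add_le_add hbefore hafter
    _ = (1 + γ) / (1 - γ) := by ring

theorem vnormSq_inv_card_smul_sum_sub {k : ℕ} {ι : Type*} {S : Finset ι} (hS : S.Nonempty)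
    (x : ι → Fin k → ℝ) (c : Fin k → ℝ) :
    vnormSq ((S.card : ℝ)⁻¹ • ∑ s ∈ S, x s - c)
      = ((S.card : ℝ)⁻¹) ^ 2 * ∑ s ∈ S, ∑ s' ∈ S, (x s - c) ⬝ᵥ (x s' - c) := by
  have hcard : (S.card : ℝ) ≠ 0 := by exact_mod_cast hS.card_pos.ne'
  have hcenter : (S.card : ℝ)⁻¹ • ∑ s ∈ S, x s - c = (S.card : ℝ)⁻¹ • ∑ s ∈ S, (x s - c) := by
    rw [Finset.sum_sub_distrib, Finset.sum_const, ← Nat.cast_smul_eq_nsmul ℝ, smul_sub,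
      inv_smul_smul₀ hcard]
  rw [hcenter, vnormSq_smul, vnormSq_eq_dotProduct, sum_dotProduct]
  simp only [dotProduct_sum]

section Kaczmarz

variable {n d : ℕ} (A : Matrix (Fin n) (Fin d) ℝ) (b : Fin n → ℝ)

theorem frobSq_nonneg : 0 ≤ frobSq A :=
  Finset.sum_nonneg fun i _ => vnormSq_nonneg (A i)

theorem rowProb_nonneg (i : Fin n) : 0 ≤ rowProb A i :=
  div_nonneg (vnormSq_nonneg _) (frobSq_nonneg A)

theorem sum_rowProb (hA : frobSq A ≠ 0) : ∑ i, rowProb A i = 1 := by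
  simp only [rowProb, ← Finset.sum_div]
  exact div_self hA

theorem pathWeight_nonneg {T : ℕ} (ω : Fin T → Fin n) : 0 ≤ pathWeight A ω :=
  Finset.prod_nonneg fun t _ => rowProb_nonneg A (ω t)

theorem sum_pathWeight (hA : frobSq A ≠ 0) (T : ℕ) : ∑ ω : Fin T → Fin n, pathWeight A ω = 1 :=
  sum_prod_apply_eq_one (sum_rowProb A hA)

/-- For a zero row both sides are `0`: its `rowProb` vanishes, and its step is the identity since
`c / 0 = 0`. -/
theorem rowProb_smul_rkStep_sub (i : Fin n) (x : Fin d → ℝ) :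
    rowProb A i • (rkStep A b i x - x) = (frobSq A)⁻¹ • ((b i - A i ⬝ᵥ x) • A i) := by
  rcases eq_or_ne (A i) 0 with h0 | h0
  · simp [h0, rowProb, vnormSq]
  have hpos : vnormSq (A i) ≠ 0 := by
    rwa [vnormSq_eq_dotProduct, Ne, dotProduct_self_eq_zero]
  rw [rkStep, add_sub_cancel_left, smul_smul, smul_smul, rowProb]
  congr 1
  field_simp

theorem sum_rowProb_smul_rkStep (hA : frobSq A ≠ 0) (x : Fin d → ℝ) :
    ∑ i, rowProb A i • rkStep A b i x = x + (frobSq A)⁻¹ • (Aᵀ *ᵥ (b - A *ᵥ x)) := by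
  have hstep : ∀ i, rowProb A i • rkStep A b i x
      = rowProb A i • x + (frobSq A)⁻¹ • ((b i - A i ⬝ᵥ x) • A i) := by
    intro i
    rw [← rowProb_smul_rkStep_sub, ← smul_add, add_sub_cancel]
  simp only [hstep, Finset.sum_add_distrib, ← Finset.sum_smul, sum_rowProb A hA, one_smul,
    ← Finset.smul_sum, mulVec_transpose, vecMul_eq_sum]
  rfl

theorem sum_rowProb_smul_rkStep_sub (hA : frobSq A ≠ 0) {xs : Fin d → ℝ}
    (hxs : Aᵀ *ᵥ (b - A *ᵥ xs) = 0) (x : Fin d → ℝ) :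
    ∑ i, rowProb A i • (rkStep A b i x - xs) = kacMat A *ᵥ (x - xs) := by
  have hres : Aᵀ *ᵥ (b - A *ᵥ x) = -((Aᵀ * A) *ᵥ (x - xs)) := by
    have hsplit : b - A *ᵥ x = (b - A *ᵥ xs) - A *ᵥ (x - xs) := by
      rw [mulVec_sub]; abel
    rw [hsplit, mulVec_sub, hxs, zero_sub, mulVec_mulVec]
  simp only [smul_sub, Finset.sum_sub_distrib, sum_rowProb_smul_rkStep A b hA, ← Finset.sum_smul,
    sum_rowProb A hA, one_smul, hres, smul_neg, kacMat, sub_mulVec, one_mulVec, smul_mulVec]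
  abel

theorem vnormSq_sub_mulVec_eq {xs : Fin d → ℝ} (hxs : Aᵀ *ᵥ (b - A *ᵥ xs) = 0) (y : Fin d → ℝ) :
    vnormSq (b - A *ᵥ y) = vnormSq (b - A *ᵥ xs) + vnormSq (A *ᵥ (y - xs)) := by
  have hsplit : b - A *ᵥ y = (b - A *ᵥ xs) - A *ᵥ (y - xs) := by
    rw [mulVec_sub]; abel
  have horth : (b - A *ᵥ xs) ⬝ᵥ (A *ᵥ (y - xs)) = 0 := by
    rw [dotProduct_mulVec, ← mulVec_transpose, hxs, zero_dotProduct]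
  simp only [hsplit, vnormSq_eq_dotProduct]
  generalize b - A *ᵥ xs = u at horth ⊢
  generalize A *ᵥ (y - xs) = v at horth ⊢
  rw [sub_dotProduct, dotProduct_sub, dotProduct_sub, dotProduct_comm v u, horth]
  ring

/-- Writing `ρᵢ = bᵢ - aᵢ ⬝ xs` and `uᵢ = aᵢ ⬝ (x - xs)`, the step moves the error by
`(ρᵢ - uᵢ) aᵢ / ‖aᵢ‖²`, which changes its squared norm by `(ρᵢ² - uᵢ²) / ‖aᵢ‖²`. -/
theorem rowProb_mul_vnormSq_rkStep_sub_le (i : Fin n) (x xs : Fin d → ℝ) :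
    rowProb A i * vnormSq (rkStep A b i x - xs)
      ≤ rowProb A i * vnormSq (x - xs)
        + ((b i - A i ⬝ᵥ xs) ^ 2 - (A i ⬝ᵥ (x - xs)) ^ 2) / frobSq A := by
  rcases eq_or_ne (A i) 0 with h0 | h0
  · simp only [h0, rowProb, vnormSq, Pi.zero_apply, zero_dotProduct]
    simpa using div_nonneg (sq_nonneg (b i)) (frobSq_nonneg A)
  have hpos : vnormSq (A i) ≠ 0 := by
    rwa [vnormSq_eq_dotProduct, Ne, dotProduct_self_eq_zero]
  have hstep : rkStep A b i x - xs
      = (x - xs) + ((b i - A i ⬝ᵥ xs - A i ⬝ᵥ (x - xs)) / vnormSq (A i)) • A i := by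
    rw [rkStep, dotProduct_sub, sub_sub_sub_cancel_right]
    abel
  apply le_of_eq
  rw [hstep, rowProb]
  simp only [vnormSq_eq_dotProduct] at hpos ⊢
  simp only [add_dotProduct, dotProduct_add, smul_dotProduct, dotProduct_smul, smul_eq_mul,
    dotProduct_comm (A i) (x - xs)]
  field_simp
  ring

theorem sum_rowProb_mul_vnormSq_rkStep_sub_le (hA : frobSq A ≠ 0) (x xs : Fin d → ℝ) :
    ∑ i, rowProb A i * vnormSq (rkStep A b i x - xs)
      ≤ vnormSq (x - xs) + (vnormSq (b - A *ᵥ xs) - vnormSq (A *ᵥ (x - xs))) / frobSq A := by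
  refine (Finset.sum_le_sum fun i _ => rowProb_mul_vnormSq_rkStep_sub_le A b i x xs).trans_eq ?_
  rw [Finset.sum_add_distrib, ← Finset.sum_mul, sum_rowProb A hA, one_mul, ← Finset.sum_div,
    Finset.sum_sub_distrib]
  rfl

variable (x0 : Fin d → ℝ)

theorem rkSeq_congr {ω ω' : ℕ → Fin n} {s : ℕ} (h : ∀ j < s, ω j = ω' j) :
    rkSeq A b x0 ω s = rkSeq A b x0 ω' s := by
  induction s with
  | zero => rfl
  | succ s ih =>
    rw [rkSeq, rkSeq, h s s.lt_succ_self, ih fun j hj => h j (hj.trans s.lt_succ_self)]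

theorem sum_pathWeight_mul_coord (hA : frobSq A ≠ 0) {T : ℕ} (k : Fin T)
    (G : (Fin T → Fin n) → Fin n → ℝ) (hG : ∀ ω i, G (update ω k i) = G ω) :
    ∑ ω, pathWeight A ω * G ω (ω k) = ∑ ω, pathWeight A ω * ∑ i, rowProb A i * G ω i :=
  sum_prod_mul_eq_sum_prod_mul_sum_coord (sum_rowProb A hA) k G hG

variable [NeZero n] (xs : Fin d → ℝ)

theorem rkSeq_extendPath_update {T : ℕ} (ω : Fin T → Fin n) {k : Fin T} {s : ℕ} (hs : s ≤ k)
    (i : Fin n) : rkSeq A b x0 (extendPath (update ω k i)) s = rkSeq A b x0 (extendPath ω) s :=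
  rkSeq_congr A b x0 fun j hj => by
    simp only [extendPath]
    split_ifs with hjT
    · exact update_of_ne (Fin.ne_of_val_ne (i := ⟨j, hjT⟩) (by change j ≠ k; omega)) i ω
    · rfl

theorem rkSeq_extendPath_succ {T : ℕ} (ω : Fin T → Fin n) {s : ℕ} (hs : s < T) :
    rkSeq A b x0 (extendPath ω) (s + 1)
      = rkStep A b (ω ⟨s, hs⟩) (rkSeq A b x0 (extendPath ω) s) := by
  rw [rkSeq, extendPath, dif_pos hs]

/-- `E[(x_s - xs) ⬝ (x_{s'} - xs)]` for the Kaczmarz iterates driven by `T` i.i.d. rows, written as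
a `pathWeight`-weighted sum over the `nᵀ` paths. -/
def rkErrCorr (T s s' : ℕ) : ℝ :=
  ∑ ω : Fin T → Fin n, pathWeight A ω *
    ((rkSeq A b x0 (extendPath ω) s - xs) ⬝ᵥ (rkSeq A b x0 (extendPath ω) s' - xs))

theorem rkErrCorr_comm (T s s' : ℕ) :
    rkErrCorr A b x0 xs T s s' = rkErrCorr A b x0 xs T s' s := by
  simp only [rkErrCorr, dotProduct_comm]

theorem rkErrCorr_zero_zero (hA : frobSq A ≠ 0) (T : ℕ) :
    rkErrCorr A b x0 xs T 0 0 = vnormSq (x0 - xs) := by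
  simp only [rkErrCorr, rkSeq, ← vnormSq_eq_dotProduct, ← Finset.sum_mul, sum_pathWeight A hA,
    one_mul]

end Kaczmarz

section Orthonormal

variable {n r : ℕ} {Q : Matrix (Fin n) (Fin r) ℝ} (b : Fin n → ℝ)

theorem frobSq_eq_of_orthonormal (hQ : Qᵀ * Q = 1) : frobSq Q = r := by
  have htrace := congrArg Matrix.trace hQ
  simp only [Matrix.trace, Matrix.diag, Matrix.mul_apply, Matrix.transpose_apply,
    Matrix.one_apply_eq, Finset.sum_const, Finset.card_univ, Fintype.card_fin, nsmul_eq_mul, mul_one] at htrace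
  rw [frobSq, ← htrace, Finset.sum_comm]
  simp only [vnormSq, sq]

theorem kacMat_eq_of_orthonormal (hQ : Qᵀ * Q = 1) : kacMat Q = (1 - 1 / (r : ℝ)) • 1 := by
  rw [kacMat, hQ, frobSq_eq_of_orthonormal hQ, sub_smul, one_smul, one_div]

theorem vnormSq_mulVec_of_orthonormal (hQ : Qᵀ * Q = 1) (v : Fin r → ℝ) :
    vnormSq (Q *ᵥ v) = vnormSq v := by
  rw [vnormSq_eq_dotProduct, vnormSq_eq_dotProduct, dotProduct_mulVec, ← mulVec_transpose,
    mulVec_mulVec, hQ, one_mulVec]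

theorem transpose_mulVec_residual_eq_zero (hQ : Qᵀ * Q = 1) :
    Qᵀ *ᵥ (b - Q *ᵥ (Qᵀ *ᵥ b)) = 0 := by
  rw [mulVec_sub, mulVec_mulVec, hQ, one_mulVec, sub_self]

theorem frobSq_ne_zero_of_orthonormal (hr : 0 < r) (hQ : Qᵀ * Q = 1) : frobSq Q ≠ 0 := by
  rw [frobSq_eq_of_orthonormal hQ]
  exact_mod_cast hr.ne'

theorem sum_rowProb_mul_dotProduct_rkStep_sub (hr : 0 < r) (hQ : Qᵀ * Q = 1) (a x : Fin r → ℝ) :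
    ∑ i, rowProb Q i * (a ⬝ᵥ (rkStep Q b i x - Qᵀ *ᵥ b))
      = (1 - 1 / (r : ℝ)) * (a ⬝ᵥ (x - Qᵀ *ᵥ b)) := by
  simp_rw [← smul_eq_mul, ← dotProduct_smul, ← dotProduct_sum,
    sum_rowProb_smul_rkStep_sub Q b (frobSq_ne_zero_of_orthonormal hr hQ)
      (transpose_mulVec_residual_eq_zero b hQ), kacMat_eq_of_orthonormal hQ, smul_mulVec,
    one_mulVec]

theorem sum_rowProb_mul_vnormSq_rkStep_sub_le_of_orthonormal (hr : 0 < r) (hQ : Qᵀ * Q = 1)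
    (x : Fin r → ℝ) :
    ∑ i, rowProb Q i * vnormSq (rkStep Q b i x - Qᵀ *ᵥ b)
      ≤ (1 - 1 / (r : ℝ)) * vnormSq (x - Qᵀ *ᵥ b) + vnormSq (b - Q *ᵥ (Qᵀ *ᵥ b)) / r := by
  refine (sum_rowProb_mul_vnormSq_rkStep_sub_le Q b (frobSq_ne_zero_of_orthonormal hr hQ) x
    _).trans_eq ?_
  rw [frobSq_eq_of_orthonormal hQ, vnormSq_mulVec_of_orthonormal hQ]
  ring

variable [NeZero n] (x0 : Fin r → ℝ) {T : ℕ}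

theorem rkErrCorr_succ_right (hr : 0 < r) (hQ : Qᵀ * Q = 1) {s s' : ℕ} (hss' : s ≤ s')
    (hs' : s' < T) :
    rkErrCorr Q b x0 (Qᵀ *ᵥ b) T s (s' + 1)
      = (1 - 1 / (r : ℝ)) * rkErrCorr Q b x0 (Qᵀ *ᵥ b) T s s' := by
  let G : (Fin T → Fin n) → Fin n → ℝ := fun ω i => (rkSeq Q b x0 (extendPath ω) s - Qᵀ *ᵥ b) ⬝ᵥ
    (rkStep Q b i (rkSeq Q b x0 (extendPath ω) s') - Qᵀ *ᵥ b)
  have hG : ∀ ω i, G (update ω ⟨s', hs'⟩ i) = G ω := fun ω i => by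
    simp only [G, rkSeq_extendPath_update Q b x0 ω (k := ⟨s', hs'⟩) hss',
      rkSeq_extendPath_update Q b x0 ω (k := ⟨s', hs'⟩) le_rfl]
  calc rkErrCorr Q b x0 (Qᵀ *ᵥ b) T s (s' + 1)
      = ∑ ω, pathWeight Q ω * G ω (ω ⟨s', hs'⟩) := by
        simp only [rkErrCorr, G, rkSeq_extendPath_succ Q b x0 _ hs']
    _ = ∑ ω, pathWeight Q ω * ∑ i, rowProb Q i * G ω i :=
        sum_pathWeight_mul_coord Q (frobSq_ne_zero_of_orthonormal hr hQ) _ G hG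
    _ = (1 - 1 / (r : ℝ)) * rkErrCorr Q b x0 (Qᵀ *ᵥ b) T s s' := by
        simp only [G, sum_rowProb_mul_dotProduct_rkStep_sub b hr hQ, rkErrCorr, Finset.mul_sum,
          mul_left_comm]

theorem rkErrCorr_add_right (hr : 0 < r) (hQ : Qᵀ * Q = 1) (s m : ℕ) (h : s + m ≤ T) :
    rkErrCorr Q b x0 (Qᵀ *ᵥ b) T s (s + m)
      = (1 - 1 / (r : ℝ)) ^ m * rkErrCorr Q b x0 (Qᵀ *ᵥ b) T s s := by
  induction m with
  | zero => rw [add_zero, pow_zero, one_mul]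
  | succ m ih =>
    rw [← add_assoc, rkErrCorr_succ_right b x0 hr hQ (Nat.le_add_right s m) (by omega),
      ih (by omega), pow_succ']
    ring

theorem rkErrCorr_succ_self_le (hr : 0 < r) (hQ : Qᵀ * Q = 1) {s : ℕ} (hs : s < T) :
    rkErrCorr Q b x0 (Qᵀ *ᵥ b) T (s + 1) (s + 1)
      ≤ (1 - 1 / (r : ℝ)) * rkErrCorr Q b x0 (Qᵀ *ᵥ b) T s s
        + vnormSq (b - Q *ᵥ (Qᵀ *ᵥ b)) / r := by
  let G : (Fin T → Fin n) → Fin n → ℝ := fun ω i =>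
    vnormSq (rkStep Q b i (rkSeq Q b x0 (extendPath ω) s) - Qᵀ *ᵥ b)
  have hG : ∀ ω i, G (update ω ⟨s, hs⟩ i) = G ω := fun ω i => by
    simp only [G, rkSeq_extendPath_update Q b x0 ω (k := ⟨s, hs⟩) le_rfl]
  calc rkErrCorr Q b x0 (Qᵀ *ᵥ b) T (s + 1) (s + 1)
      = ∑ ω, pathWeight Q ω * G ω (ω ⟨s, hs⟩) := by
        simp only [rkErrCorr, G, rkSeq_extendPath_succ Q b x0 _ hs, vnormSq_eq_dotProduct]
    _ = ∑ ω, pathWeight Q ω * ∑ i, rowProb Q i * G ω i :=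
        sum_pathWeight_mul_coord Q (frobSq_ne_zero_of_orthonormal hr hQ) _ G hG
    _ ≤ ∑ ω, pathWeight Q ω * ((1 - 1 / (r : ℝ)) *
          vnormSq (rkSeq Q b x0 (extendPath ω) s - Qᵀ *ᵥ b) + vnormSq (b - Q *ᵥ (Qᵀ *ᵥ b)) / r) :=
        Finset.sum_le_sum fun ω _ => mul_le_mul_of_nonneg_left
          (sum_rowProb_mul_vnormSq_rkStep_sub_le_of_orthonormal b hr hQ _) (pathWeight_nonneg Q ω)
    _ = _ := by
        simp only [mul_add, Finset.sum_add_distrib, ← Finset.sum_mul,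
          sum_pathWeight Q (frobSq_ne_zero_of_orthonormal hr hQ), one_mul, rkErrCorr,
          Finset.mul_sum, vnormSq_eq_dotProduct, mul_left_comm]

theorem rkErrCorr_self_le (hr : 0 < r) (hQ : Qᵀ * Q = 1) {s : ℕ} (hs : s ≤ T) :
    rkErrCorr Q b x0 (Qᵀ *ᵥ b) T s s
      ≤ (1 - 1 / (r : ℝ)) ^ s * vnormSq (x0 - Qᵀ *ᵥ b) + vnormSq (b - Q *ᵥ (Qᵀ *ᵥ b)) := by
  induction s with
  | zero =>
    rw [rkErrCorr_zero_zero Q b x0 _ (frobSq_ne_zero_of_orthonormal hr hQ), pow_zero, one_mul]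
    linarith [vnormSq_nonneg (b - Q *ᵥ (Qᵀ *ᵥ b))]
  | succ s ih =>
    have hγ := one_sub_one_div_nonneg hr
    calc rkErrCorr Q b x0 (Qᵀ *ᵥ b) T (s + 1) (s + 1)
        ≤ (1 - 1 / (r : ℝ)) * rkErrCorr Q b x0 (Qᵀ *ᵥ b) T s s
          + vnormSq (b - Q *ᵥ (Qᵀ *ᵥ b)) / r := rkErrCorr_succ_self_le b x0 hr hQ (by omega)
      _ ≤ (1 - 1 / (r : ℝ)) * ((1 - 1 / (r : ℝ)) ^ s * vnormSq (x0 - Qᵀ *ᵥ b)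
          + vnormSq (b - Q *ᵥ (Qᵀ *ᵥ b))) + vnormSq (b - Q *ᵥ (Qᵀ *ᵥ b)) / r := by
        gcongr
        exact ih (by omega)
      _ = _ := by ring

theorem rkErrCorr_le (hr : 0 < r) (hQ : Qᵀ * Q = 1) {tb s s' : ℕ} (hs : tb ≤ s) (hs' : tb ≤ s')
    (hsT : s ≤ T) (hs'T : s' ≤ T) :
    rkErrCorr Q b x0 (Qᵀ *ᵥ b) T s s'
      ≤ (1 - 1 / (r : ℝ)) ^ tb * vnormSq (x0 - Qᵀ *ᵥ b)
        + (1 - 1 / (r : ℝ)) ^ Nat.dist s s' * vnormSq (b - Q *ᵥ (Qᵀ *ᵥ b)) := by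
  wlog hss' : s ≤ s' generalizing s s'
  · rw [rkErrCorr_comm, Nat.dist_comm]
    exact this hs' hs hs'T hsT (le_of_not_ge hss')
  have hγ0 := one_sub_one_div_nonneg hr
  obtain ⟨m, rfl⟩ := Nat.exists_eq_add_of_le hss'
  rw [rkErrCorr_add_right b x0 hr hQ s m hs'T, Nat.dist_eq_sub_of_le hss', Nat.add_sub_cancel_left]
  calc (1 - 1 / (r : ℝ)) ^ m * rkErrCorr Q b x0 (Qᵀ *ᵥ b) T s s
      ≤ (1 - 1 / (r : ℝ)) ^ m * ((1 - 1 / (r : ℝ)) ^ s * vnormSq (x0 - Qᵀ *ᵥ b)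
          + vnormSq (b - Q *ᵥ (Qᵀ *ᵥ b))) := by
        gcongr
        exact rkErrCorr_self_le b x0 hr hQ hsT
    _ = (1 - 1 / (r : ℝ)) ^ (m + s) * vnormSq (x0 - Qᵀ *ᵥ b)
          + (1 - 1 / (r : ℝ)) ^ m * vnormSq (b - Q *ᵥ (Qᵀ *ᵥ b)) := by ring
    _ ≤ _ := by
        have hpow := pow_le_pow_of_le_one hγ0 (one_sub_one_div_lt_one hr).le
          (show tb ≤ m + s by omega)
        gcongr
        exact vnormSq_nonneg _

theorem sum_pathWeight_mul_vnormSq_average_eq (hr : 0 < r) (hQ : Qᵀ * Q = 1) {S : Finset ℕ}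
    (hS : S.Nonempty) :
    ∑ ω : Fin T → Fin n, pathWeight Q ω *
        vnormSq (b - Q *ᵥ ((S.card : ℝ)⁻¹ • ∑ s ∈ S, rkSeq Q b x0 (extendPath ω) s))
      = vnormSq (b - Q *ᵥ (Qᵀ *ᵥ b))
        + ((S.card : ℝ)⁻¹) ^ 2 * ∑ s ∈ S, ∑ s' ∈ S, rkErrCorr Q b x0 (Qᵀ *ᵥ b) T s s' := by
  rw [Finset.sum_congr rfl fun ω _ => by
    rw [vnormSq_sub_mulVec_eq Q b (transpose_mulVec_residual_eq_zero b hQ),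
      vnormSq_mulVec_of_orthonormal hQ, vnormSq_inv_card_smul_sum_sub hS]]
  simp only [mul_add, Finset.sum_add_distrib, ← Finset.sum_mul,
    sum_pathWeight Q (frobSq_ne_zero_of_orthonormal hr hQ), one_mul, rkErrCorr, Finset.mul_sum]
  rw [Finset.sum_comm]
  refine congrArg _ (Finset.sum_congr rfl fun s _ => ?_)
  rw [Finset.sum_comm]
  simp only [mul_left_comm]

theorem sum_sum_rkErrCorr_le (hr : 0 < r) (hQ : Qᵀ * Q = 1) {tb : ℕ} {S : Finset ℕ}
    (hS : ∀ s ∈ S, tb ≤ s ∧ s ≤ T) :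
    ∑ s ∈ S, ∑ s' ∈ S, rkErrCorr Q b x0 (Qᵀ *ᵥ b) T s s'
      ≤ S.card * (S.card * ((1 - 1 / (r : ℝ)) ^ tb * vnormSq (x0 - Qᵀ *ᵥ b))
        + (2 * r - 1) * vnormSq (b - Q *ᵥ (Qᵀ *ᵥ b))) := by
  set γ := 1 - 1 / (r : ℝ)
  have hgeom : (1 + γ) / (1 - γ) = 2 * r - 1 := by
    have : (r : ℝ) ≠ 0 := by exact_mod_cast hr.ne'
    simp only [γ]
    field_simp
    ring
  calc ∑ s ∈ S, ∑ s' ∈ S, rkErrCorr Q b x0 (Qᵀ *ᵥ b) T s s'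
      ≤ ∑ s ∈ S, ∑ s' ∈ S, (γ ^ tb * vnormSq (x0 - Qᵀ *ᵥ b)
          + γ ^ Nat.dist s s' * vnormSq (b - Q *ᵥ (Qᵀ *ᵥ b))) :=
        Finset.sum_le_sum fun s hs => Finset.sum_le_sum fun s' hs' =>
          rkErrCorr_le b x0 hr hQ (hS s hs).1 (hS s' hs').1 (hS s hs).2 (hS s' hs').2
    _ = ∑ s ∈ S, (S.card * (γ ^ tb * vnormSq (x0 - Qᵀ *ᵥ b))
          + (∑ s' ∈ S, γ ^ Nat.dist s s') * vnormSq (b - Q *ᵥ (Qᵀ *ᵥ b))) := by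
        simp only [Finset.sum_add_distrib, Finset.sum_const, nsmul_eq_mul, Finset.sum_mul]
    _ ≤ ∑ s ∈ S, (S.card * (γ ^ tb * vnormSq (x0 - Qᵀ *ᵥ b))
          + (2 * r - 1) * vnormSq (b - Q *ᵥ (Qᵀ *ᵥ b))) := by
        refine Finset.sum_le_sum fun s _ => ?_
        rw [← hgeom]
        gcongr
        · exact vnormSq_nonneg _
        · exact sum_pow_dist_le (one_sub_one_div_nonneg hr) (one_sub_one_div_lt_one hr) s S
    _ = _ := by rw [Finset.sum_const, nsmul_eq_mul]

theorem sum_pathWeight_mul_vnormSq_tailAverage_le (hr : 0 < r) (hQ : Qᵀ * Q = 1) {tb t : ℕ}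
    (htb : tb < t) :
    ∑ ω : Fin t → Fin n, pathWeight Q ω *
        vnormSq (b - Q *ᵥ ((((t : ℝ) - (tb : ℝ))⁻¹) •
          (∑ s ∈ Finset.Ico tb t, rkSeq Q b x0 (extendPath ω) s)))
      ≤ (1 + (2 * (r : ℝ) - 1) / ((t : ℝ) - (tb : ℝ))) * vnormSq (b - Q *ᵥ (Qᵀ *ᵥ b))
        + (1 - 1 / (r : ℝ)) ^ tb * vnormSq (x0 - Qᵀ *ᵥ b) := by
  have hS := Finset.nonempty_Ico.2 htb
  have hN : ((Finset.Ico tb t).card : ℝ) = (t : ℝ) - (tb : ℝ) := by simp [Nat.cast_sub htb.le]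
  have hN0 : (t : ℝ) - (tb : ℝ) ≠ 0 := by rw [← hN]; exact_mod_cast hS.card_pos.ne'
  rw [← hN, sum_pathWeight_mul_vnormSq_average_eq b x0 hr hQ hS]
  calc _ ≤ vnormSq (b - Q *ᵥ (Qᵀ *ᵥ b)) + (((Finset.Ico tb t).card : ℝ)⁻¹) ^ 2 *
        ((Finset.Ico tb t).card * ((Finset.Ico tb t).card *
          ((1 - 1 / (r : ℝ)) ^ tb * vnormSq (x0 - Qᵀ *ᵥ b))
          + (2 * r - 1) * vnormSq (b - Q *ᵥ (Qᵀ *ᵥ b)))) := by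
        gcongr
        exact sum_sum_rkErrCorr_le b x0 hr hQ fun s hs =>
          ⟨(Finset.mem_Ico.1 hs).1, (Finset.mem_Ico.1 hs).2.le⟩
    _ = _ := by
        rw [hN]
        field_simp
        ring

end Orthonormal

/-- preconditioned TARK. If Q has orthonormal columns and the (random)
initialization y_0 satisfies E‖y_0 - y⋆‖² ≤ r ‖b - Qy⋆‖², then the TARK tail average
satisfies E‖b - Q ȳ_t‖² ≤ [1 + (1 - 1/r)^{t_b} r + (2r-1)/(t - t_b)] ‖b - Qy⋆‖². -/
theorem preconditioned_tark {n r : ℕ} [NeZero n] (hr : 0 < r)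
    (Q : Matrix (Fin n) (Fin r) ℝ) (hQ : Qᵀ * Q = 1) (b : Fin n → ℝ)
    (Ω : Type) [Fintype Ω] (w : Ω → ℝ) (hw0 : ∀ o, 0 ≤ w o) (hw1 : ∑ o, w o = 1)
    (y0 : Ω → Fin r → ℝ)
    (hinit : ∑ o, w o * vnormSq (y0 o - Qᵀ *ᵥ b)
      ≤ (r : ℝ) * vnormSq (b - Q *ᵥ (Qᵀ *ᵥ b)))
    (tb t : ℕ) (htb : tb < t) :
    ∑ o, ∑ ω : Fin t → Fin n, w o * pathWeight Q ω *
        vnormSq (b - Q *ᵥ ((((t : ℝ) - (tb : ℝ))⁻¹) •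
          (∑ s ∈ Finset.Ico tb t, rkSeq Q b (y0 o) (extendPath ω) s)))
      ≤ (1 + (1 - 1 / (r : ℝ)) ^ tb * (r : ℝ) + (2 * (r : ℝ) - 1) / ((t : ℝ) - (tb : ℝ))) *
          vnormSq (b - Q *ᵥ (Qᵀ *ᵥ b)) := by
  set C := (1 + (2 * (r : ℝ) - 1) / ((t : ℝ) - (tb : ℝ))) * vnormSq (b - Q *ᵥ (Qᵀ *ᵥ b))
  calc _ = ∑ o, w o * ∑ ω : Fin t → Fin n, pathWeight Q ω *
          vnormSq (b - Q *ᵥ ((((t : ℝ) - (tb : ℝ))⁻¹) •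
            (∑ s ∈ Finset.Ico tb t, rkSeq Q b (y0 o) (extendPath ω) s))) := by
        simp only [Finset.mul_sum, mul_assoc]
    _ ≤ ∑ o, w o * (C + (1 - 1 / (r : ℝ)) ^ tb * vnormSq (y0 o - Qᵀ *ᵥ b)) :=
        Finset.sum_le_sum fun o _ => mul_le_mul_of_nonneg_left
          (sum_pathWeight_mul_vnormSq_tailAverage_le b (y0 o) hr hQ htb) (hw0 o)
    _ = C + (1 - 1 / (r : ℝ)) ^ tb * ∑ o, w o * vnormSq (y0 o - Qᵀ *ᵥ b) := by
        simp only [mul_add, Finset.sum_add_distrib, ← Finset.sum_mul, hw1, one_mul,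
          Finset.mul_sum, mul_left_comm]
    _ ≤ C + (1 - 1 / (r : ℝ)) ^ tb * ((r : ℝ) * vnormSq (b - Q *ᵥ (Qᵀ *ᵥ b))) := by
        gcongr
        exact pow_nonneg (one_sub_one_div_nonneg hr) tb
    _ = _ := by ring
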